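/- Under the assumptions that ∇_x f(x,·) is L_{fx}-Lipschitz, ∇_y f(x,·) is L_{fy}-Lipschitz and bounded by C_{fy}, ∇²_{xy}g(x,·) is L_{gxy}-Lipschitz and bounded (in spectral norm) by C_{gxy}, ∇²_{yy}g(x,·) is L_{gyy}-Lipschitz and ∇²_{yy}g(x,y) ⪰ λI, the map Φ(y) = ∇_x f(x,y) - ∇²_{xy}g(x,y)[∇²_{yy}g(x,y)]⁻¹ ∇_y f(x,y) satisfies ‖Φ(y) - Φ(y')‖² ≤ C₀‖y - y'‖² with C₀ = 2L_{fx}² + 6C_{fy}²L_{gxy}²/λ² + 6C_{fy}²C_{gxy}²L_{gyy}²/λ⁴ + 6L_{fy}²C_{gxy}²/λ². -/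

import Mathlib

/-!
Write `w y = H(y)⁻¹ v(y)`. Coercivity gives `λ‖x‖ ≤ ‖H(y) x‖`, so `H(y)` is invertible
(Lax–Milgram), `‖w y‖ ≤ C_fy / λ`, and the identity
`H(y') (w y - w y') = (H(y') - H(y)) (w y) + (v y - v y')` makes `w` Lipschitz with constant
`L_gyy C_fy / λ² + L_fy / λ`. Splitting
`Φ y - Φ y' = (A y - A y') - (B y - B y') (w y) - B y' (w y - w y')` bounds `‖Φ y - Φ y'‖` by a
sum of four multiples of `‖y - y'‖`, and `(a + b + c + e)² ≤ 2a² + 6(b² + c² + e²)` gives the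
constant.
-/
open RealInnerProductSpace

namespace ContinuousLinearMap

section Coercive

variable {E : Type*} [NormedAddCommGroup E] [InnerProductSpace ℝ E] {T : E →L[ℝ] E} {lam : ℝ}

theorem mul_norm_le_norm_apply_of_coercive (hT : ∀ x, lam * ‖x‖ ^ 2 ≤ ⟪T x, x⟫) (x : E) :
    lam * ‖x‖ ≤ ‖T x‖ := by
  rcases (norm_nonneg x).eq_or_lt with hx | hx
  · simp [← hx]
  · refine le_of_mul_le_mul_right ?_ hx
    calc lam * ‖x‖ * ‖x‖ = lam * ‖x‖ ^ 2 := by ring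
      _ ≤ ⟪T x, x⟫ := hT x
      _ ≤ ‖T x‖ * ‖x‖ := real_inner_le_norm _ _

theorem isUnit_of_coercive [CompleteSpace E] (hlam : 0 < lam)
    (hT : ∀ x, lam * ‖x‖ ^ 2 ≤ ⟪T x, x⟫) : IsUnit T := by
  have hB : IsCoercive ((innerSL ℝ : E →L[ℝ] E →L[ℝ] ℝ) ∘L T) :=
    ⟨lam, hlam, fun x => by rw [mul_assoc, ← sq]; exact hT x⟩
  refine ⟨hB.continuousLinearEquivOfBilin.toUnit, ?_⟩
  ext x
  exact ext_inner_right ℝ fun w => hB.continuousLinearEquivOfBilin_apply x w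

end Coercive

section BoundedBelow

variable {E F : Type*} [SeminormedAddCommGroup E] [NormedSpace ℝ E]
  [SeminormedAddCommGroup F] [NormedSpace ℝ F]

theorem apply_ringInverse_apply {T : E →L[ℝ] E} (hT : IsUnit T) (u : E) :
    T (Ring.inverse T u) = u :=
  DFunLike.congr_fun (Ring.mul_inverse_cancel T hT) u

theorem mul_norm_ringInverse_apply_le {T : E →L[ℝ] E} {lam : ℝ} (hT : IsUnit T)
    (hlow : ∀ x, lam * ‖x‖ ≤ ‖T x‖) (u : E) : lam * ‖Ring.inverse T u‖ ≤ ‖u‖ := by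
  simpa only [apply_ringInverse_apply hT] using hlow (Ring.inverse T u)

theorem mul_norm_ringInverse_apply_sub_le {S T : E →L[ℝ] E} {lam : ℝ} (hS : IsUnit S)
    (hT : IsUnit T) (hlow : ∀ x, lam * ‖x‖ ≤ ‖S x‖) (u u' : E) :
    lam * ‖Ring.inverse T u - Ring.inverse S u'‖ ≤ ‖S - T‖ * ‖Ring.inverse T u‖ + ‖u - u'‖ := by
  have key : S (Ring.inverse T u - Ring.inverse S u') = (S - T) (Ring.inverse T u) + (u - u') := by
    rw [map_sub, sub_apply, apply_ringInverse_apply hS, apply_ringInverse_apply hT]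
    abel
  calc lam * ‖Ring.inverse T u - Ring.inverse S u'‖
      ≤ ‖S (Ring.inverse T u - Ring.inverse S u')‖ := hlow _
    _ ≤ ‖(S - T) (Ring.inverse T u)‖ + ‖u - u'‖ := key ▸ norm_add_le _ _
    _ ≤ ‖S - T‖ * ‖Ring.inverse T u‖ + ‖u - u'‖ := by gcongr; exact le_opNorm _ _

theorem norm_apply_sub_apply_le (B B' : E →L[ℝ] F) (w w' : E) :
    ‖B w - B' w'‖ ≤ ‖B - B'‖ * ‖w‖ + ‖B'‖ * ‖w - w'‖ := by
  calc ‖B w - B' w'‖ = ‖(B - B') w + B' (w - w')‖ := by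
        rw [sub_apply, map_sub]; abel_nf
    _ ≤ ‖(B - B') w‖ + ‖B' (w - w')‖ := norm_add_le _ _
    _ ≤ ‖B - B'‖ * ‖w‖ + ‖B'‖ * ‖w - w'‖ := add_le_add (le_opNorm _ _) (le_opNorm _ _)

end BoundedBelow

end ContinuousLinearMap

theorem sq_le_of_le_add_add_add {x a b c e : ℝ} (hx : 0 ≤ x) (h : x ≤ a + b + c + e) :
    x ^ 2 ≤ 2 * a ^ 2 + 6 * b ^ 2 + 6 * c ^ 2 + 6 * e ^ 2 := by
  nlinarith [sq_nonneg (a - b - c - e), sq_nonneg (b - c), sq_nonneg (b - e),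
    sq_nonneg (c - e), sq_nonneg (a + b + c + e)]

open ContinuousLinearMap

theorem stmt6_general {d d' : ℕ}
    (A : EuclideanSpace ℝ (Fin d') → EuclideanSpace ℝ (Fin d))
    (B : EuclideanSpace ℝ (Fin d') → (EuclideanSpace ℝ (Fin d') →L[ℝ] EuclideanSpace ℝ (Fin d)))
    (Hm : EuclideanSpace ℝ (Fin d') → (EuclideanSpace ℝ (Fin d') →L[ℝ] EuclideanSpace ℝ (Fin d')))
    (v : EuclideanSpace ℝ (Fin d') → EuclideanSpace ℝ (Fin d'))
    (lam Lfx Lfy Lgxy Lgyy Cfy Cgxy : ℝ) (hlam : 0 < lam)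
    (hA : ∀ y y', ‖A y - A y'‖ ≤ Lfx * ‖y - y'‖)
    (hvlip : ∀ y y', ‖v y - v y'‖ ≤ Lfy * ‖y - y'‖)
    (hvbd : ∀ y, ‖v y‖ ≤ Cfy)
    (hBlip : ∀ y y', ‖B y - B y'‖ ≤ Lgxy * ‖y - y'‖)
    (hBbd : ∀ y, ‖B y‖ ≤ Cgxy)
    (hHlip : ∀ y y', ‖Hm y - Hm y'‖ ≤ Lgyy * ‖y - y'‖)
    (hHc : ∀ y x, lam * ‖x‖ ^ 2 ≤ (inner ℝ (Hm y x) x : ℝ))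
    (Φ : EuclideanSpace ℝ (Fin d') → EuclideanSpace ℝ (Fin d))
    (hΦ : ∀ y, Φ y = A y - B y (Ring.inverse (Hm y) (v y))) :
    ∀ y y', ‖Φ y - Φ y'‖ ^ 2
      ≤ (2 * Lfx ^ 2 + 6 * Cfy ^ 2 * Lgxy ^ 2 / lam ^ 2
          + 6 * Cfy ^ 2 * Cgxy ^ 2 * Lgyy ^ 2 / lam ^ 4
          + 6 * Lfy ^ 2 * Cgxy ^ 2 / lam ^ 2) * ‖y - y'‖ ^ 2 := by
  intro y y'
  set r := ‖y - y'‖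
  set w := fun z => Ring.inverse (Hm z) (v z)
  have hlow z : ∀ x, lam * ‖x‖ ≤ ‖Hm z x‖ := mul_norm_le_norm_apply_of_coercive (hHc z)
  have hunit z : IsUnit (Hm z) := isUnit_of_coercive hlam (hHc z)
  have hw_bd z : ‖w z‖ ≤ Cfy / lam := by
    rw [le_div_iff₀' hlam]
    exact (mul_norm_ringInverse_apply_le (hunit z) (hlow z) _).trans (hvbd z)
  have hw_lip : ‖w y - w y'‖ ≤ (Lgyy * r * (Cfy / lam) + Lfy * r) / lam := by
    have hH : ‖Hm y' - Hm y‖ ≤ Lgyy * r := norm_sub_rev (Hm y') (Hm y) ▸ hHlip y y'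
    rw [le_div_iff₀' hlam]
    refine (mul_norm_ringInverse_apply_sub_le (hunit y') (hunit y) (hlow y') _ _).trans ?_
    exact add_le_add (mul_le_mul hH (hw_bd y) (norm_nonneg _) ((norm_nonneg _).trans hH))
      (hvlip y y')
  have hΦ_le : ‖Φ y - Φ y'‖ ≤ Lfx * r + Lgxy * r * (Cfy / lam)
      + Cgxy * ((Lgyy * r * (Cfy / lam) + Lfy * r) / lam) := by
    rw [hΦ, hΦ, sub_sub_sub_comm, add_assoc]
    refine (norm_sub_le _ _).trans (add_le_add (hA y y') ?_)
    refine (norm_apply_sub_apply_le _ _ _ _).trans (add_le_add ?_ ?_)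
    · exact mul_le_mul (hBlip y y') (hw_bd y) (norm_nonneg _) ((norm_nonneg _).trans (hBlip y y'))
    · exact mul_le_mul (hBbd y') hw_lip (norm_nonneg _) ((norm_nonneg _).trans (hBbd y'))
  have hΦ_le' : ‖Φ y - Φ y'‖ ≤ Lfx * r + Cfy * Lgxy / lam * r
      + Cfy * Cgxy * Lgyy / lam ^ 2 * r + Lfy * Cgxy / lam * r :=
    hΦ_le.trans_eq (by field_simp; ring)
  refine (sq_le_of_le_add_add_add (norm_nonneg _) hΦ_le').trans_eq ?_
  field_simp

/-- Lipschitz continuity of the hypergradient map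
`Φ(y) = ∇_x f(x,y) - ∇²_{xy}g(x,y)[∇²_{yy}g(x,y)]⁻¹ ∇_y f(x,y)`. -/
theorem stmt6 {d d' : ℕ}
    (A : EuclideanSpace ℝ (Fin d') → EuclideanSpace ℝ (Fin d))
    (B : EuclideanSpace ℝ (Fin d') → (EuclideanSpace ℝ (Fin d') →L[ℝ] EuclideanSpace ℝ (Fin d)))
    (Hm : EuclideanSpace ℝ (Fin d') → (EuclideanSpace ℝ (Fin d') →L[ℝ] EuclideanSpace ℝ (Fin d')))
    (v : EuclideanSpace ℝ (Fin d') → EuclideanSpace ℝ (Fin d'))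
    (lam Lfx Lfy Lgxy Lgyy Cfy Cgxy : ℝ) (hlam : 0 < lam)
    (hA : ∀ y y', ‖A y - A y'‖ ≤ Lfx * ‖y - y'‖)
    (hvlip : ∀ y y', ‖v y - v y'‖ ≤ Lfy * ‖y - y'‖)
    (hvbd : ∀ y, ‖v y‖ ≤ Cfy)
    (hBlip : ∀ y y', ‖B y - B y'‖ ≤ Lgxy * ‖y - y'‖)
    (hBbd : ∀ y, ‖B y‖ ≤ Cgxy)
    (hHlip : ∀ y y', ‖Hm y - Hm y'‖ ≤ Lgyy * ‖y - y'‖)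
    (hHsa : ∀ y, IsSelfAdjoint (Hm y))
    (hHc : ∀ y x, lam * ‖x‖ ^ 2 ≤ (inner ℝ (Hm y x) x : ℝ))
    (Φ : EuclideanSpace ℝ (Fin d') → EuclideanSpace ℝ (Fin d))
    (hΦ : ∀ y, Φ y = A y - B y (Ring.inverse (Hm y) (v y))) :
    ∀ y y', ‖Φ y - Φ y'‖ ^ 2
      ≤ (2 * Lfx ^ 2 + 6 * Cfy ^ 2 * Lgxy ^ 2 / lam ^ 2
          + 6 * Cfy ^ 2 * Cgxy ^ 2 * Lgyy ^ 2 / lam ^ 4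
          + 6 * Lfy ^ 2 * Cgxy ^ 2 / lam ^ 2) * ‖y - y'‖ ^ 2 :=
  stmt6_general A B Hm v lam Lfx Lfy Lgxy Lgyy Cfy Cgxy hlam hA hvlip hvbd hBlip hBbd hHlip hHc Φ hΦ
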